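/- arXiv:1901.00493 — 2 statements merged into one kernel-verified Lean document; each statement's English description precedes it below -/
import Mathlib

section
/- Let E be the (n+1)×(n+1) lower-triangular integer matrix with entries E_{ik} = σ_0(i - k) for 0 ≤ k ≤ i ≤ n and 0 otherwise, where σ_0 is the pentagonal number theorem sequence. Then E is invertible over ℤ, and its inverse has entries (E^{-1})_{ik} = p(i - k) for k ≤ i (and 0 otherwise), where p is the partition function. -/
/-!
Both matrices are truncations of the lower-triangular Toeplitz representation
`f ↦ (coeff (i - k) f)ᵢₖ` of power series, which is multiplicative because the product of two
such matrices computes the Cauchy product of the coefficient sequences. The claim therefore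
reduces to the power series identity `∏ (1 - X ^ m) * ∑ p(n) X ^ n = 1`, which follows by
multiplying the Euler product factorwise with the product formula `∏ 1 / (1 - X ^ m)` for the
partition generating function.
-/

/-- Coefficient of `x^n` in Euler's product `∏_{m ≥ 1} (1 - x^m)` (the pentagonal
number theorem sequence); factors with `m > n` do not affect this coefficient, so the
product may be truncated at `m = n`. -/
noncomputable def sigma0 (n : ℕ) : ℤ :=
  PowerSeries.coeff (R := ℤ) n (∏ m ∈ Finset.Icc 1 n, (1 - PowerSeries.X ^ m))

/-- Coefficient of `x^n` in `∏_{m ≥ 1, m ≠ j} (1 - x^m)` (the `j`-laced sequence);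
for `j = 0` this is the full Euler product. -/
noncomputable def sigmaJ (j n : ℕ) : ℤ :=
  PowerSeries.coeff (R := ℤ) n (∏ m ∈ (Finset.Icc 1 n).erase j, (1 - PowerSeries.X ^ m))

/-- `ρ(0) = 1`, and for `n ≥ 1`, `ρ(n)` is the number of positive divisors of `n`. -/
def rho (n : ℕ) : ℤ := if n = 0 then 1 else (n.divisors.card : ℤ)

/-- Integer-indexed `ρ`, vanishing on negative arguments. -/
def rhoZ (m : ℤ) : ℤ := if 0 ≤ m then rho m.toNat else 0

/-- The σ-sequence: `σ(n) = ∑_{j=0}^{n} σ_j(n - j)`, the coefficient of `x^n` in the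
σ-function `∑_{h ≥ 0} x^h ∏_{m ≥ 1, m ≠ h} (1 - x^m)`. -/
noncomputable def sigmaSeq (n : ℕ) : ℤ := ∑ j ∈ Finset.range (n+1), sigmaJ j (n - j)

/-- Integer-indexed pentagonal sequence, vanishing on negative arguments. -/
noncomputable def sigma0Z (m : ℤ) : ℤ := if 0 ≤ m then sigma0 m.toNat else 0

/-- Integer-indexed partition function, vanishing on negative arguments. -/
noncomputable def partZ (m : ℤ) : ℤ := if 0 ≤ m then (Nat.card (Nat.Partition m.toNat) : ℤ) else 0

open PowerSeries Finset
open scoped PowerSeries.WithPiTopology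

section LowerToeplitz

variable {R : Type*} [CommSemiring R] {n : ℕ}

noncomputable def lowerToeplitz (n : ℕ) (f : R⟦X⟧) : Matrix (Fin n) (Fin n) R :=
  Matrix.of fun i k ↦ if k ≤ i then coeff ((i : ℕ) - k) f else 0

theorem lowerToeplitz_one : lowerToeplitz n (1 : R⟦X⟧) = 1 := by
  ext i k
  simp only [lowerToeplitz, Matrix.of_apply, Matrix.one_apply, coeff_one, Fin.ext_iff, Fin.le_def]
  split_ifs <;> first | rfl | omega

theorem lowerToeplitz_mul (f g : R⟦X⟧) :
    lowerToeplitz n f * lowerToeplitz n g = lowerToeplitz n (f * g) := by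
  ext i k
  simp only [lowerToeplitz, Matrix.mul_apply, Matrix.of_apply, Fin.le_def]
  rw [Fin.sum_univ_eq_sum_range (fun l ↦
    (if l ≤ i then coeff ((i : ℕ) - l) f else 0) * if k ≤ l then coeff (l - k) g else 0)]
  split_ifs with hki
  · obtain ⟨m, hm⟩ := Nat.exists_eq_add_of_le hki
    have hi : (i : ℕ) + 1 ≤ n := i.isLt
    -- only the indices `l = k + d` with `d ≤ m` contribute
    rw [← sum_subset (range_subset_range.2 hi), hm, add_assoc, sum_range_add,
      sum_eq_zero fun l hl ↦ ?_, zero_add, mul_comm, coeff_mul,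
      Nat.sum_antidiagonal_eq_sum_range_succ (fun a b ↦ coeff a g * coeff b f),
      Nat.add_sub_cancel_left]
    · refine sum_congr rfl fun d hd ↦ ?_
      rw [mem_range] at hd
      rw [if_pos (show (k : ℕ) + d ≤ k + m by omega), if_pos (Nat.le_add_right _ _), mul_comm,
        Nat.add_sub_cancel_left, Nat.add_sub_add_left]
    · rw [mem_range] at hl
      rw [if_neg (show ¬(k : ℕ) ≤ l by omega), mul_zero]
    · intro l _ hl
      rw [mem_range] at hl
      rw [if_neg (show ¬l ≤ (i : ℕ) by omega), zero_mul]
  · refine sum_eq_zero fun l _ ↦ ?_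
    split_ifs <;> first | omega | simp

theorem lowerToeplitz_mk_eq_of (F : ℤ → R) (hF : ∀ m < 0, F m = 0) :
    lowerToeplitz n (PowerSeries.mk fun m : ℕ ↦ F m) = Matrix.of fun i k : Fin n ↦ F (i - k) := by
  ext i k
  simp only [lowerToeplitz, Matrix.of_apply, coeff_mk, Fin.le_def]
  split_ifs with hki
  · rw [Nat.cast_sub hki]
  · rw [hF _ (by omega)]

end LowerToeplitz

theorem coeff_mul_prod_one_sub_X_pow_of_lt {R : Type*} [CommRing R] (g : R⟦X⟧) {k : ℕ}
    (e : ℕ → ℕ) (s : Finset ℕ) (hs : ∀ i ∈ s, k < e i) :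
    coeff k (g * ∏ i ∈ s, (1 - X ^ e i)) = coeff k g := by
  induction s using Finset.induction_on with
  | empty => simp
  | insert a s ha ih =>
    rw [prod_insert ha, mul_left_comm, sub_mul, one_mul, map_sub, coeff_X_pow_mul',
      if_neg (not_le.2 (hs a (mem_insert_self a s))), sub_zero,
      ih fun i hi ↦ hs i (mem_insert_of_mem hi)]

theorem coeff_prod_Icc_one_sub_X_pow_eq_coeff_pentagonalSeries (R : Type*) [CommRing R] (n : ℕ) :
    coeff n (∏ m ∈ Icc 1 n, (1 - X ^ m : R⟦X⟧)) = coeff n (pentagonalSeries R) := by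
  obtain ⟨s, hs, hrange⟩ := ((coeff_prod_one_sub_X_pow_eventually_eq R n).and
    (Filter.eventually_ge_atTop (range n))).exists
  have hIcc : ∏ m ∈ Icc 1 n, (1 - X ^ m : R⟦X⟧) = ∏ i ∈ range n, (1 - X ^ (i + 1)) := by
    rw [← Ico_add_one_right_eq_Icc, prod_Ico_eq_prod_range]
    simp only [add_comm, add_tsub_cancel_right]
  rw [← hs, hIcc, ← prod_sdiff hrange, mul_comm, coeff_mul_prod_one_sub_X_pow_of_lt]
  intro i hi
  rw [mem_sdiff, mem_range] at hi
  omega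

theorem hasProd_tsum_X_pow_powerSeriesMk_card_partition (R : Type*) [CommSemiring R]
    [TopologicalSpace R] [IsTopologicalSemiring R] [T2Space R] :
    HasProd (fun i ↦ ∑' j : ℕ, (X : R⟦X⟧) ^ ((i + 1) * j))
      (PowerSeries.mk fun n ↦ (Nat.card n.Partition : R)) := by
  have hall (n : ℕ) : Nat.Partition.restricted n (fun _ ↦ True) = univ :=
    filter_true_of_mem fun _ _ _ _ ↦ trivial
  simpa [hall, Nat.card_eq_fintype_card] using
    Nat.Partition.hasProd_powerSeriesMk_card_restricted R (fun _ ↦ True)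

theorem pentagonalSeries_mul_powerSeriesMk_card_partition (R : Type*) [CommRing R] :
    pentagonalSeries R * PowerSeries.mk (fun n ↦ (Nat.card n.Partition : R)) = 1 := by
  -- the discrete topology on `R` only serves to multiply the two infinite products factorwise
  let _ : TopologicalSpace R := ⊥
  have _ : DiscreteTopology R := ⟨rfl⟩
  have h := (WithPiTopology.hasProd_one_sub_X_pow R).mul
    (hasProd_tsum_X_pow_powerSeriesMk_card_partition R)
  have hfactor (i : ℕ) : (1 - X ^ (i + 1) : R⟦X⟧) * ∑' j : ℕ, X ^ ((i + 1) * j) = 1 := by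
    simp_rw [pow_mul]
    exact WithPiTopology.one_sub_mul_tsum_pow_of_constantCoeff_eq_zero (by simp)
  simp only [hfactor] at h
  exact h.unique hasProd_one

theorem powerSeriesMk_sigma0Z : PowerSeries.mk (fun m : ℕ ↦ sigma0Z m) = pentagonalSeries ℤ := by
  ext m
  simp [sigma0Z, sigma0, coeff_prod_Icc_one_sub_X_pow_eq_coeff_pentagonalSeries]

theorem powerSeriesMk_partZ :
    PowerSeries.mk (fun m : ℕ ↦ partZ m) = PowerSeries.mk fun n ↦ (Nat.card n.Partition : ℤ) := by
  ext m
  simp [partZ]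

/-- The `(n+1) × (n+1)` lower-triangular Toeplitz matrix `E_{ik} = σ_0(i - k)` is
invertible over `ℤ`, with inverse `(E⁻¹)_{ik} = p(i - k)`, `p` the partition function. -/
theorem stmt18 (n : ℕ) :
    IsUnit (Matrix.of fun i k : Fin (n+1) => sigma0Z ((i : ℤ) - (k : ℤ))) ∧
    (Matrix.of fun i k : Fin (n+1) => sigma0Z ((i : ℤ) - (k : ℤ)))⁻¹ =
      Matrix.of fun i k : Fin (n+1) => partZ ((i : ℤ) - (k : ℤ)) := by
  have hE : (Matrix.of fun i k : Fin (n+1) => sigma0Z ((i : ℤ) - (k : ℤ))) =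
      lowerToeplitz (n + 1) (pentagonalSeries ℤ) := by
    rw [← powerSeriesMk_sigma0Z, lowerToeplitz_mk_eq_of]
    intro m hm
    rw [sigma0Z, if_neg hm.not_ge]
  have hP : (Matrix.of fun i k : Fin (n+1) => partZ ((i : ℤ) - (k : ℤ))) =
      lowerToeplitz (n + 1) (PowerSeries.mk fun m ↦ (Nat.card m.Partition : ℤ)) := by
    rw [← powerSeriesMk_partZ, lowerToeplitz_mk_eq_of]
    intro m hm
    rw [partZ, if_neg hm.not_ge]
  have hEP : (Matrix.of fun i k : Fin (n+1) => sigma0Z ((i : ℤ) - (k : ℤ))) *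
      (Matrix.of fun i k : Fin (n+1) => partZ ((i : ℤ) - (k : ℤ))) = 1 := by
    rw [hE, hP, lowerToeplitz_mul, pentagonalSeries_mul_powerSeriesMk_card_partition,
      lowerToeplitz_one]
  exact ⟨IsUnit.of_mul_eq_one _ hEP, Matrix.inv_eq_right_inv hEP⟩
end

section
/- With E the (n+1)×(n+1) lower-triangular Toeplitz matrix E_{ik} = σ_0(i - k), the vector ρ⃗ = (ρ(0), ..., ρ(n))ᵀ and σ⃗ = (σ(0), ..., σ(n))ᵀ satisfy ρ⃗ = E^{-1} σ⃗, equivalently ρ(i) = ∑_{k=0}^{i} p(i - k) σ(k) for all 0 ≤ i ≤ n, where p is the partition function. -/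
/-- The partition function `p(m)`. -/
noncomputable def partN (m : ℕ) : ℕ := Nat.card (Nat.Partition m)


/-!
With `F = ∏_{m ≥ 1} (1 - x^m)`, Euler's partition generating function gives `F · ∑ p(n) x^n = 1`,
and `D = 1 + ∑_{h ≥ 1} x^h / (1 - x^h) = ∑ ρ(n) x^n`. Multiplying `D` by `F` cancels the factor
`1 - x^h` of the `h`-th summand, so `F · D` is the σ-function `S`. Hence `E ρ⃗ = σ⃗` for the
unitriangular matrix `E`, and `D = (∑ p(n) x^n) · S`. Coefficients up to `x^N` only see the factors
with `m ≤ N`, so all products are truncated there and compared modulo `X^(N+1)`.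
-/

open PowerSeries Finset
open scoped PowerSeries.WithPiTopology

theorem Finset.dvd_prod_sub_one {ι R : Type*} [CommRing R] {s : Finset ι} {f : ι → R} {d : R}
    (h : ∀ i ∈ s, d ∣ f i - 1) : d ∣ ∏ i ∈ s, f i - 1 := by
  rw [← Ideal.mem_span_singleton, ← Ideal.Quotient.eq, map_prod, map_one]
  exact prod_eq_one fun i hi => Ideal.Quotient.eq.2 (Ideal.mem_span_singleton.2 (h i hi))

theorem Finset.dvd_prod_sub_prod_of_subset {ι R : Type*} [CommRing R] [DecidableEq ι]
    {s t : Finset ι} {f : ι → R} {d : R} (hst : s ⊆ t) (h : ∀ i ∈ t \ s, d ∣ f i - 1) :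
    d ∣ ∏ i ∈ t, f i - ∏ i ∈ s, f i := by
  rw [← prod_sdiff hst, ← sub_one_mul]
  exact (dvd_prod_sub_one h).mul_right _

theorem Finset.range_succ_filter_le {N n : ℕ} (hn : n ≤ N) :
    (range (N + 1)).filter (· ≤ n) = range (n + 1) := by
  ext k; simp only [mem_filter, mem_range]; omega

namespace PowerSeries

variable {R : Type*} [CommRing R]

theorem coeff_mul_eq_sum_range (f g : R⟦X⟧) (n : ℕ) :
    coeff n (f * g) = ∑ k ∈ range (n + 1), coeff k f * coeff (n - k) g := by
  rw [coeff_mul, Nat.sum_antidiagonal_eq_sum_range_succ (fun i j => coeff i f * coeff j g)]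

theorem coeff_eq_of_X_pow_dvd_sub {f g : R⟦X⟧} {N k : ℕ} (h : X ^ (N + 1) ∣ f - g)
    (hk : k ≤ N) : coeff k f = coeff k g := by
  rw [← sub_eq_zero, ← map_sub]
  exact X_pow_dvd_iff.1 h k (by omega)

theorem X_pow_dvd_one_sub_X_pow_sub_one {n m : ℕ} (h : n ≤ m) :
    X ^ n ∣ (1 - X ^ m : R⟦X⟧) - 1 := by
  rw [sub_sub_cancel_left, dvd_neg]
  exact pow_dvd_pow X h

theorem coeff_prod_one_sub_X_pow_of_subset {s t : Finset ℕ} {N k : ℕ}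
    (hst : s ⊆ t) (ht : ∀ m ∈ t \ s, N < m) (hk : k ≤ N) :
    coeff k (∏ m ∈ t, (1 - X ^ m : R⟦X⟧)) = coeff k (∏ m ∈ s, (1 - X ^ m)) :=
  coeff_eq_of_X_pow_dvd_sub (dvd_prod_sub_prod_of_subset hst fun m hm =>
    X_pow_dvd_one_sub_X_pow_sub_one (ht m hm)) hk

theorem X_pow_dvd_prod_sub_of_hasProd [TopologicalSpace R] [T2Space R] {ι : Type*}
    [DecidableEq ι] {f : ι → R⟦X⟧} {a : R⟦X⟧} (ha : HasProd f a) {s : Finset ι}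
    {N : ℕ} (hf : ∀ i ∉ s, X ^ (N + 1) ∣ f i - 1) : X ^ (N + 1) ∣ ∏ i ∈ s, f i - a := by
  refine X_pow_dvd_iff.2 fun k hk => ?_
  rw [map_sub, sub_eq_zero]
  have hlim := ((WithPiTopology.continuous_coeff R k).tendsto a).comp ha
  -- the `k`-th coefficient of the partial products is constant once they contain `s`
  refine tendsto_nhds_unique (tendsto_const_nhds.congr' ?_) hlim
  filter_upwards [Filter.eventually_ge_atTop s] with t hst
  exact (coeff_eq_of_X_pow_dvd_sub
    (dvd_prod_sub_prod_of_subset hst fun i hi => hf i (mem_sdiff.1 hi).2) (by omega)).symm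

end PowerSeries

noncomputable section

def partitionGenFun : ℤ⟦X⟧ := mk fun n => (partN n : ℤ)

def eulerTrunc (N : ℕ) : ℤ⟦X⟧ := ∏ m ∈ Icc 1 N, (1 - X ^ m)

def multiplesSeries (h : ℕ) : ℤ⟦X⟧ := mk fun n => if h ∣ n then 1 else 0

def divisorSeriesTrunc (N : ℕ) : ℤ⟦X⟧ := 1 + ∑ h ∈ Icc 1 N, X ^ h * multiplesSeries h

def sigmaSeriesTrunc (N : ℕ) : ℤ⟦X⟧ :=
  ∑ h ∈ range (N + 1), X ^ h * ∏ m ∈ (Icc 1 N).erase h, (1 - X ^ m)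

end

theorem hasProd_partitionGenFun :
    HasProd (fun i => ∑' j : ℕ, (X : ℤ⟦X⟧) ^ ((i + 1) * j)) partitionGenFun := by
  have h := Nat.Partition.hasProd_powerSeriesMk_card_restricted ℤ (fun _ => True)
  simp only [if_true, Nat.Partition.restricted, implies_true, filter_true, card_univ] at h
  simpa [partitionGenFun, partN, Nat.card_eq_fintype_card] using h

theorem tprod_one_sub_X_pow_mul_partitionGenFun :
    (∏' i, (1 - X ^ (i + 1))) * partitionGenFun = 1 := by
  refine ((WithPiTopology.multipliable_one_sub_X_pow ℤ).hasProd.mul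
    hasProd_partitionGenFun).unique ?_
  convert hasProd_one with i
  simp_rw [pow_mul]
  exact WithPiTopology.one_sub_mul_tsum_pow_of_constantCoeff_eq_zero (by simp)

theorem one_sub_X_pow_mul_multiplesSeries {h : ℕ} (hh : 0 < h) :
    (1 - X ^ h) * multiplesSeries h = 1 := by
  ext n
  rw [sub_mul, one_mul, map_sub, coeff_X_pow_mul', multiplesSeries, coeff_mk, coeff_mk, coeff_one]
  rcases Nat.eq_zero_or_pos n with rfl | hn
  · simp [hh.ne']
  · by_cases hhn : h ≤ n
    · simp [hn.ne', hhn, Nat.dvd_sub_iff_left hhn dvd_rfl]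
    · have : ¬ h ∣ n := fun hd => hhn (Nat.le_of_dvd hn hd)
      simp [hn.ne', hhn, this]

theorem X_pow_mul_multiplesSeries {h : ℕ} (hh : 0 < h) :
    X ^ h * multiplesSeries h = multiplesSeries h - 1 := by
  linear_combination -one_sub_X_pow_mul_multiplesSeries hh

theorem coeff_multiplesSeries_sub_one (h n : ℕ) :
    coeff n (multiplesSeries h - 1) = if h ∈ n.divisors then 1 else 0 := by
  rcases eq_or_ne n 0 with rfl | hn
  · simp [multiplesSeries]
  · simp [multiplesSeries, coeff_one, hn, Nat.mem_divisors]

theorem coeff_divisorSeriesTrunc {N n : ℕ} (hn : n ≤ N) :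
    coeff n (divisorSeriesTrunc N) = rho n := by
  have hdiv : n.divisors ⊆ Icc 1 N := fun d hd =>
    mem_Icc.2 ⟨Nat.pos_of_mem_divisors hd, (Nat.divisor_le hd).trans hn⟩
  rw [divisorSeriesTrunc, map_add, map_sum,
    sum_congr rfl fun h hh => by rw [X_pow_mul_multiplesSeries (mem_Icc.1 hh).1,
      coeff_multiplesSeries_sub_one], sum_boole, filter_mem_eq_inter, inter_eq_right.2 hdiv, rho,
    coeff_one]
  split_ifs with h0 <;> simp [h0]

theorem eulerTrunc_mul_divisorSeriesTrunc (N : ℕ) :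
    eulerTrunc N * divisorSeriesTrunc N = sigmaSeriesTrunc N := by
  have hrange : range (N + 1) = insert 0 (Icc 1 N) := by
    ext x; simp only [mem_range, mem_insert, mem_Icc]; omega
  rw [sigmaSeriesTrunc, hrange, sum_insert (by simp), pow_zero, one_mul,
    erase_eq_of_notMem (by simp), divisorSeriesTrunc, mul_add, mul_one, mul_sum]
  congr 1
  refine sum_congr rfl fun h hh => ?_
  rw [eulerTrunc, ← mul_prod_erase _ _ hh]
  linear_combination (X ^ h * ∏ m ∈ (Icc 1 N).erase h, (1 - X ^ m)) *
    one_sub_X_pow_mul_multiplesSeries (mem_Icc.1 hh).1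

theorem coeff_eulerTrunc {N n : ℕ} (hn : n ≤ N) : coeff n (eulerTrunc N) = sigma0 n :=
  coeff_prod_one_sub_X_pow_of_subset (Icc_subset_Icc_right hn)
    (fun m hm => by simp only [mem_sdiff, mem_Icc] at hm; omega) le_rfl

theorem coeff_sigmaSeriesTrunc {N n : ℕ} (hn : n ≤ N) :
    coeff n (sigmaSeriesTrunc N) = sigmaSeq n := by
  simp_rw [sigmaSeriesTrunc, map_sum, coeff_X_pow_mul', ← sum_filter, range_succ_filter_le hn,
    sigmaSeq]
  refine sum_congr rfl fun h _ =>
    coeff_prod_one_sub_X_pow_of_subset (erase_subset_erase _ (Icc_subset_Icc_right (by omega)))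
      (fun m hm => by simp only [mem_sdiff, mem_erase, mem_Icc] at hm; omega) le_rfl

theorem X_pow_dvd_eulerTrunc_sub_tprod (N : ℕ) :
    X ^ (N + 1) ∣ eulerTrunc N - ∏' i, (1 - X ^ (i + 1)) := by
  have hprod : eulerTrunc N = ∏ i ∈ range N, (1 - X ^ (i + 1)) := by
    rw [eulerTrunc, range_eq_Ico, prod_Ico_add' (fun m => (1 : ℤ⟦X⟧) - X ^ m),
      ← Ico_add_one_right_eq_Icc, zero_add]
  rw [hprod]
  exact X_pow_dvd_prod_sub_of_hasProd (WithPiTopology.multipliable_one_sub_X_pow ℤ).hasProd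
    fun i hi => X_pow_dvd_one_sub_X_pow_sub_one (by simpa using hi)

theorem X_pow_dvd_divisorSeriesTrunc_sub (N : ℕ) :
    X ^ (N + 1) ∣ divisorSeriesTrunc N - partitionGenFun * sigmaSeriesTrunc N := by
  have h : divisorSeriesTrunc N - partitionGenFun * sigmaSeriesTrunc N =
      -(partitionGenFun * divisorSeriesTrunc N) *
        (eulerTrunc N - ∏' i, (1 - X ^ (i + 1))) := by
    rw [← eulerTrunc_mul_divisorSeriesTrunc]
    linear_combination (-divisorSeriesTrunc N) * tprod_one_sub_X_pow_mul_partitionGenFun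
  rw [h]
  exact (X_pow_dvd_eulerTrunc_sub_tprod N).mul_left _

theorem sum_fin_ite_le_mul {R : Type*} [CommRing R] (a v : ℕ → R) {n : ℕ} (i : Fin (n + 1)) :
    ∑ k : Fin (n + 1), (if (k : ℕ) ≤ i then a (i - k) else 0) * v k =
      ∑ k ∈ range (i + 1), a (i - k) * v k := by
  rw [Fin.sum_univ_eq_sum_range (fun k => (if k ≤ i then a (i - k) else 0) * v k)]
  simp only [ite_mul, zero_mul]
  rw [← sum_filter, range_succ_filter_le (Nat.lt_succ_iff.1 i.2)]

theorem rhoZ_natCast (n : ℕ) : rhoZ n = rho n := by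
  simp [rhoZ]

theorem sigma0Z_natCast_sub (i k : ℕ) :
    sigma0Z ((i : ℤ) - k) = if k ≤ i then sigma0 (i - k) else 0 := by
  rcases le_or_gt k i with h | h
  · rw [sigma0Z, if_pos (by omega), if_pos h]
    congr
    omega
  · rw [sigma0Z, if_neg (by omega), if_neg (by omega)]

theorem sum_sigma0_mul_rho (i : ℕ) :
    ∑ k ∈ range (i + 1), sigma0 (i - k) * rho k = sigmaSeq i := by
  rw [← coeff_sigmaSeriesTrunc le_rfl, ← eulerTrunc_mul_divisorSeriesTrunc, mul_comm,
    coeff_mul_eq_sum_range]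
  refine sum_congr rfl fun k hk => ?_
  rw [mem_range] at hk
  rw [coeff_divisorSeriesTrunc (by omega), coeff_eulerTrunc (by omega), mul_comm]

theorem rho_eq_sum_partN_mul_sigmaSeq (i : ℕ) :
    rho i = ∑ k ∈ range (i + 1), (partN (i - k) : ℤ) * sigmaSeq k := by
  rw [← coeff_divisorSeriesTrunc le_rfl,
    coeff_eq_of_X_pow_dvd_sub (X_pow_dvd_divisorSeriesTrunc_sub i) le_rfl, mul_comm,
    coeff_mul_eq_sum_range]
  refine sum_congr rfl fun k hk => ?_
  rw [mem_range] at hk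
  rw [coeff_sigmaSeriesTrunc (by omega), partitionGenFun, coeff_mk, mul_comm]

theorem det_sigma0Z_toeplitz (n : ℕ) :
    (Matrix.of fun i k : Fin (n + 1) => sigma0Z ((i : ℤ) - (k : ℤ))).det = 1 := by
  rw [Matrix.det_of_isLowerTriangular]
  · simp [sigma0Z, sigma0]
  · intro i k hik
    simp only [Matrix.of_apply, sigma0Z_natCast_sub]
    exact if_neg (not_le.2 hik)

/-- Identity (3.3): with `E_{ik} = σ_0(i-k)` the `(n+1) × (n+1)` Toeplitz matrix,
`ρ⃗ = E⁻¹ σ⃗`; equivalently `ρ(i) = ∑_{k=0}^{i} p(i-k) σ(k)` for all `0 ≤ i ≤ n`. -/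
theorem stmt19 (n : ℕ) :
    (fun i : Fin (n+1) => rhoZ (i : ℤ)) =
      (Matrix.of fun i k : Fin (n+1) => sigma0Z ((i : ℤ) - (k : ℤ)))⁻¹.mulVec
        (fun k : Fin (n+1) => sigmaSeq k) ∧
    ∀ i : ℕ, i ≤ n →
      rhoZ (i : ℤ) = ∑ k ∈ Finset.range (i+1), (partN (i - k) : ℤ) * sigmaSeq k := by
  set E := Matrix.of fun i k : Fin (n + 1) => sigma0Z ((i : ℤ) - (k : ℤ))
  have : Invertible E := E.invertibleOfIsUnitDet (by rw [det_sigma0Z_toeplitz]; exact isUnit_one)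
  refine ⟨(Matrix.inv_mulVec_eq_vec ?_).symm, fun i _ => ?_⟩
  · funext i
    simp only [E, Matrix.mulVec, dotProduct, Matrix.of_apply, sigma0Z_natCast_sub, rhoZ_natCast]
    rw [sum_fin_ite_le_mul, sum_sigma0_mul_rho]
  · rw [rhoZ_natCast, rho_eq_sum_partN_mul_sigmaSeq]
end
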